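/- arXiv:1904.09384 — 2 statements merged into one kernel-verified Lean document; each statement's English description precedes it below -/
import Mathlib

section
/- Let H ∈ (1/2, 1), 0 < T₁ < T, and let ψ : [0, T] → ℝ be measurable with |ψ(s)| ≤ M₁ for all s ∈ [0, T₁] and |ψ(t)| ≤ M₂ for all t ∈ (T₁, T]. Then there exists a constant C > 0 depending only on H and T₁ such that for every t ∈ (T₁, T], t^{H−1/2} | ∫_0^{T₁} (t^{1/2−H} ψ(t) − s^{1/2−H} ψ(s)) (t − s)^{−(H+1/2)} ds | ≤ C t^{H−1/2} (M₁ + M₂) ((t − T₁)^{1/2−H} + t^{1/2−H} + 1). -/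
open MeasureTheory intervalIntegral Set

set_option maxHeartbeats 1000000 in
/-- Off-diagonal estimate: for `H ∈ (1/2, 1)` and `T₁ > 0` there is a constant `C > 0`,
depending only on `H` and `T₁`, such that for every `T > T₁`, every bounded measurable
`ψ` (bounded by `M₁` on `[0, T₁]` and by `M₂` on `(T₁, T]`) and every `t ∈ (T₁, T]`,
`t^{H−1/2} |∫_0^{T₁} (t^{1/2−H} ψ(t) − s^{1/2−H} ψ(s)) (t − s)^{−(H+1/2)} ds|
  ≤ C t^{H−1/2} (M₁ + M₂) ((t − T₁)^{1/2−H} + t^{1/2−H} + 1)`. -/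
theorem off_diagonal_J1_bound
    (H : ℝ) (hH₁ : 1 / 2 < H) (hH₂ : H < 1) (T₁ : ℝ) (hT₁ : 0 < T₁) :
    ∃ C > (0:ℝ), ∀ (T : ℝ), T₁ < T → ∀ (ψ : ℝ → ℝ), Measurable ψ →
      ∀ (M₁ M₂ : ℝ),
        (∀ s ∈ Icc (0:ℝ) T₁, |ψ s| ≤ M₁) →
        (∀ t ∈ Ioc T₁ T, |ψ t| ≤ M₂) →
        ∀ t ∈ Ioc T₁ T,
          t ^ (H - 1 / 2) *
              |∫ s in (0:ℝ)..T₁,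
                  (t ^ (1 / 2 - H) * ψ t - s ^ (1 / 2 - H) * ψ s) * (t - s) ^ (-(H + 1 / 2))|
            ≤ C * t ^ (H - 1 / 2) * (M₁ + M₂)
                * ((t - T₁) ^ (1 / 2 - H) + t ^ (1 / 2 - H) + 1) := by
  set β : ℝ := 1 / 2 - H with hβ
  set a : ℝ := H + 1 / 2 with ha
  have hβneg : β < 0 := by simp [hβ]; linarith
  have hβgt : -1 < β := by simp [hβ]; linarith
  have hβ1 : 0 < β + 1 := by linarith
  have hh : 0 < H - 1 / 2 := by linarith
  have hβval : β = -(H - 1 / 2) := by rw [hβ]; ring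
  have hT₁2 : (0:ℝ) < T₁ / 2 := by linarith
  set KA : ℝ := (T₁ / 2) ^ (-a) * ((T₁ / 2) ^ (β + 1) / (β + 1)) with hKA
  have hKA0 : 0 ≤ KA := by
    have h1 : (0:ℝ) ≤ (T₁ / 2) ^ (-a) := Real.rpow_nonneg hT₁2.le _
    have h2 : (0:ℝ) ≤ (T₁ / 2) ^ (β + 1) := Real.rpow_nonneg hT₁2.le _
    positivity
  have hT₁β : (0:ℝ) ≤ T₁ ^ β := Real.rpow_nonneg hT₁.le _
  have hT₁2β : (0:ℝ) ≤ (T₁ / 2) ^ β := Real.rpow_nonneg hT₁2.le _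
  refine ⟨(T₁ ^ β + (T₁ / 2) ^ β) / (H - 1 / 2) + (KA + 1), by positivity,
    fun T hT ψ hψ M₁ M₂ hψ₁ hψ₂ t ht => ?_⟩
  obtain ⟨ht1, ht2⟩ := ht
  have ht0 : 0 < t := hT₁.trans ht1
  have htt : 0 < t - T₁ := by linarith
  have hM₁ : 0 ≤ M₁ := le_trans (abs_nonneg _) (hψ₁ 0 ⟨le_refl _, hT₁.le⟩)
  have hM₂ : 0 ≤ M₂ := le_trans (abs_nonneg _) (hψ₂ t ⟨ht1, ht2⟩)
  have hx : (0:ℝ) ≤ (t - T₁) ^ β := Real.rpow_nonneg htt.le _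
  have hy : (0:ℝ) ≤ t ^ β := Real.rpow_nonneg ht0.le _
  have hyT : t ^ β ≤ T₁ ^ β := Real.rpow_le_rpow_of_nonpos hT₁ ht1.le hβneg.le
  have haneg : -a < 0 := by simp [ha]; linarith
  have hX1 : (1:ℝ) ≤ (t - T₁) ^ β + t ^ β + 1 := by linarith
  have hXpos : (0:ℝ) ≤ (t - T₁) ^ β + t ^ β + 1 := by linarith
  have hQ : (0:ℝ) ≤ (M₁ + M₂) * ((t - T₁) ^ β + t ^ β + 1) := by positivity
  -- integrability
  have hcont : IntervalIntegrable (fun s => (t - s) ^ (-a)) volume 0 T₁ := by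
    apply ContinuousOn.intervalIntegrable
    apply ContinuousOn.rpow_const (by fun_prop)
    intro s hs
    rw [uIcc_of_le hT₁.le] at hs
    exact Or.inl (by nlinarith [hs.2])
  have h₁ : IntervalIntegrable (fun s => (t ^ β * ψ t) * (t - s) ^ (-a)) volume 0 T₁ :=
    hcont.const_mul _
  have hrint : IntervalIntegrable (fun s : ℝ => s ^ β) volume 0 T₁ :=
    intervalIntegral.intervalIntegrable_rpow' hβgt
  have hbig : IntervalIntegrable (fun s : ℝ => (M₁ * (t - T₁) ^ (-a)) * s ^ β) volume 0 T₁ :=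
    hrint.const_mul _
  have hmeas2 : Measurable (fun s : ℝ => s ^ β * ψ s * (t - s) ^ (-a)) := by fun_prop
  have h₂ : IntervalIntegrable (fun s : ℝ => s ^ β * ψ s * (t - s) ^ (-a)) volume 0 T₁ := by
    apply hbig.mono_fun' hmeas2.aestronglyMeasurable
    rw [uIoc_of_le hT₁.le]
    filter_upwards [ae_restrict_mem measurableSet_Ioc] with s hs
    have hs0 : 0 < s := hs.1
    have hsT : s ≤ T₁ := hs.2
    have hts : 0 < t - s := by linarith
    have h1 : (t - s) ^ (-a) ≤ (t - T₁) ^ (-a) :=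
      Real.rpow_le_rpow_of_nonpos htt (by linarith) haneg.le
    have habs : |ψ s| ≤ M₁ := hψ₁ s ⟨hs0.le, hsT⟩
    have h2 : 0 ≤ s ^ β := Real.rpow_nonneg hs0.le β
    have h3 : 0 ≤ (t - s) ^ (-a) := Real.rpow_nonneg hts.le _
    have h4 : 0 ≤ (t - T₁) ^ (-a) := Real.rpow_nonneg htt.le _
    simp only [Real.norm_eq_abs, abs_mul, abs_of_nonneg h2, abs_of_nonneg h3]
    calc s ^ β * |ψ s| * (t - s) ^ (-a) ≤ s ^ β * M₁ * (t - T₁) ^ (-a) := by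
          apply mul_le_mul (mul_le_mul_of_nonneg_left habs h2) h1 h3 (by positivity)
      _ = (M₁ * (t - T₁) ^ (-a)) * s ^ β := by ring
  -- split the integral
  have hsplit : (∫ s in (0:ℝ)..T₁,
      (t ^ β * ψ t - s ^ β * ψ s) * (t - s) ^ (-a))
      = (t ^ β * ψ t) * (∫ s in (0:ℝ)..T₁, (t - s) ^ (-a))
        - ∫ s in (0:ℝ)..T₁, s ^ β * ψ s * (t - s) ^ (-a) := by
    rw [← intervalIntegral.integral_const_mul, ← intervalIntegral.integral_sub h₁ h₂]
    congr 1; ext s; ring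
  -- compute I₁
  have hI₁ : (∫ s in (0:ℝ)..T₁, (t - s) ^ (-a))
      = (t ^ β - (t - T₁) ^ β) / β := by
    have := intervalIntegral.integral_comp_sub_left (a := (0:ℝ)) (b := T₁)
      (fun u : ℝ => u ^ (-a)) t
    rw [show (fun s : ℝ => (t - s) ^ (-a)) = fun s => (fun u : ℝ => u ^ (-a)) (t - s) from rfl,
      this, sub_zero]
    rw [integral_rpow (Or.inr ⟨by simp [ha]; intro h; linarith, by
      rw [uIcc_of_le (by linarith)]
      rintro ⟨h1, h2⟩; linarith⟩)]
    have : -a + 1 = β := by rw [ha, hβ]; ring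
    rw [this]
  -- bound on the first term
  have hterm1 : |t ^ β * ψ t * ((t ^ β - (t - T₁) ^ β) / β)|
      ≤ T₁ ^ β / (H - 1 / 2) * ((M₁ + M₂) * ((t - T₁) ^ β + t ^ β + 1)) := by
    have he : |t ^ β * ψ t * ((t ^ β - (t - T₁) ^ β) / β)|
        = t ^ β * |ψ t| * (|t ^ β - (t - T₁) ^ β| / (H - 1 / 2)) := by
      rw [abs_mul, abs_mul, abs_div, abs_of_nonneg hy, hβval, abs_neg,
        abs_of_pos hh]
    rw [he]
    have h1 : |t ^ β - (t - T₁) ^ β| ≤ (t - T₁) ^ β + t ^ β + 1 :=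
      le_trans (abs_sub _ _) (by rw [abs_of_nonneg hy, abs_of_nonneg hx]; linarith)
    calc t ^ β * |ψ t| * (|t ^ β - (t - T₁) ^ β| / (H - 1 / 2))
        ≤ T₁ ^ β * (M₁ + M₂) * (((t - T₁) ^ β + t ^ β + 1) / (H - 1 / 2)) := by
          apply mul_le_mul (mul_le_mul hyT (le_trans (hψ₂ t ⟨ht1, ht2⟩) (by linarith))
            (abs_nonneg _) hT₁β)
            ((div_le_div_iff_of_pos_right hh).mpr h1) (by positivity) (by positivity)
      _ = T₁ ^ β / (H - 1 / 2) * ((M₁ + M₂) * ((t - T₁) ^ β + t ^ β + 1)) := by ring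
  -- split the second integral at T₁/2
  have hsub1 : uIcc (0:ℝ) (T₁/2) ⊆ uIcc (0:ℝ) T₁ := by
    rw [uIcc_of_le hT₁2.le, uIcc_of_le hT₁.le]; exact Icc_subset_Icc le_rfl (by linarith)
  have hsub2 : uIcc (T₁/2) T₁ ⊆ uIcc (0:ℝ) T₁ := by
    rw [uIcc_of_le (by linarith : T₁/2 ≤ T₁), uIcc_of_le hT₁.le]
    exact Icc_subset_Icc hT₁2.le le_rfl
  have h₂A := h₂.mono_set hsub1
  have h₂B := h₂.mono_set hsub2
  have hsum : (∫ s in (0:ℝ)..T₁, s ^ β * ψ s * (t - s) ^ (-a))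
      = (∫ s in (0:ℝ)..T₁/2, s ^ β * ψ s * (t - s) ^ (-a))
        + ∫ s in (T₁/2)..T₁, s ^ β * ψ s * (t - s) ^ (-a) :=
    (intervalIntegral.integral_add_adjacent_intervals h₂A h₂B).symm
  -- Part A
  have hABound : |∫ s in (0:ℝ)..T₁/2, s ^ β * ψ s * (t - s) ^ (-a)| ≤ M₁ * KA := by
    have hgA : IntervalIntegrable (fun s : ℝ => (M₁ * (T₁/2) ^ (-a)) * s ^ β) volume 0 (T₁/2) :=
      (intervalIntegral.intervalIntegrable_rpow' hβgt).const_mul _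
    calc |∫ s in (0:ℝ)..T₁/2, s ^ β * ψ s * (t - s) ^ (-a)|
        ≤ ∫ s in (0:ℝ)..T₁/2, |s ^ β * ψ s * (t - s) ^ (-a)| :=
          intervalIntegral.abs_integral_le_integral_abs hT₁2.le
      _ ≤ ∫ s in (0:ℝ)..T₁/2, (M₁ * (T₁/2) ^ (-a)) * s ^ β := by
          apply intervalIntegral.integral_mono_on hT₁2.le h₂A.abs hgA
          intro s hs
          have hs0 : 0 ≤ s := hs.1
          have hsT : s ≤ T₁ / 2 := hs.2
          have hts : 0 < t - s := by linarith
          have h2 : 0 ≤ s ^ β := Real.rpow_nonneg hs0 β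
          have h3 : 0 ≤ (t - s) ^ (-a) := Real.rpow_nonneg hts.le _
          have h1 : (t - s) ^ (-a) ≤ (T₁/2) ^ (-a) :=
            Real.rpow_le_rpow_of_nonpos hT₁2 (by linarith) haneg.le
          have habs : |ψ s| ≤ M₁ := hψ₁ s ⟨hs0, by linarith⟩
          rw [abs_mul, abs_mul, abs_of_nonneg h2, abs_of_nonneg h3]
          calc s ^ β * |ψ s| * (t - s) ^ (-a) ≤ s ^ β * M₁ * (T₁/2) ^ (-a) :=
                mul_le_mul (mul_le_mul_of_nonneg_left habs h2) h1 h3 (by positivity)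
            _ = (M₁ * (T₁/2) ^ (-a)) * s ^ β := by ring
      _ = (M₁ * (T₁/2) ^ (-a)) * ∫ s in (0:ℝ)..T₁/2, s ^ β :=
          intervalIntegral.integral_const_mul _ _
      _ = M₁ * KA := by
          rw [integral_rpow (Or.inl hβgt), Real.zero_rpow (by linarith : β + 1 ≠ 0), hKA]
          ring
  -- Part B
  have hIB : (∫ s in (T₁/2)..T₁, (t - s) ^ (-a)) = ((t - T₁/2) ^ β - (t - T₁) ^ β) / β := by
    have := intervalIntegral.integral_comp_sub_left (a := T₁/2) (b := T₁)
      (fun u : ℝ => u ^ (-a)) t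
    rw [show (fun s : ℝ => (t - s) ^ (-a)) = fun s => (fun u : ℝ => u ^ (-a)) (t - s) from rfl,
      this]
    rw [integral_rpow (Or.inr ⟨by simp [ha]; intro h; linarith, by
      rw [uIcc_of_le (by linarith)]
      rintro ⟨h1, h2⟩; linarith⟩)]
    have : -a + 1 = β := by rw [ha, hβ]; ring
    rw [this]
  have hBBound : |∫ s in (T₁/2)..T₁, s ^ β * ψ s * (t - s) ^ (-a)|
      ≤ (T₁/2) ^ β / (H - 1 / 2) * ((M₁ + M₂) * ((t - T₁) ^ β + t ^ β + 1)) := by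
    have hgB : IntervalIntegrable (fun s : ℝ => (M₁ * (T₁/2) ^ β) * (t - s) ^ (-a))
        volume (T₁/2) T₁ := (hcont.mono_set hsub2).const_mul _
    have hval : ((t - T₁/2) ^ β - (t - T₁) ^ β) / β
        ≤ ((t - T₁) ^ β + t ^ β + 1) / (H - 1 / 2) := by
      have hz : (0:ℝ) ≤ (t - T₁/2) ^ β := Real.rpow_nonneg (by linarith) _
      have heq : ((t - T₁/2) ^ β - (t - T₁) ^ β) / β
          = ((t - T₁) ^ β - (t - T₁/2) ^ β) / (H - 1 / 2) := by
        rw [hβval, div_neg, ← neg_div, neg_sub]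
      rw [heq]
      exact (div_le_div_iff_of_pos_right hh).mpr (by linarith)
    calc |∫ s in (T₁/2)..T₁, s ^ β * ψ s * (t - s) ^ (-a)|
        ≤ ∫ s in (T₁/2)..T₁, |s ^ β * ψ s * (t - s) ^ (-a)| :=
          intervalIntegral.abs_integral_le_integral_abs (by linarith)
      _ ≤ ∫ s in (T₁/2)..T₁, (M₁ * (T₁/2) ^ β) * (t - s) ^ (-a) := by
          apply intervalIntegral.integral_mono_on (by linarith) h₂B.abs hgB
          intro s hs
          have hs0 : 0 < s := lt_of_lt_of_le hT₁2 hs.1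
          have hts : 0 < t - s := by have := hs.2; linarith
          have h2 : 0 ≤ s ^ β := Real.rpow_nonneg hs0.le β
          have h3 : 0 ≤ (t - s) ^ (-a) := Real.rpow_nonneg hts.le _
          have h1 : s ^ β ≤ (T₁/2) ^ β :=
            Real.rpow_le_rpow_of_nonpos hT₁2 hs.1 hβneg.le
          have habs : |ψ s| ≤ M₁ := hψ₁ s ⟨hs0.le, hs.2⟩
          rw [abs_mul, abs_mul, abs_of_nonneg h2, abs_of_nonneg h3]
          calc s ^ β * |ψ s| * (t - s) ^ (-a) ≤ (T₁/2) ^ β * M₁ * (t - s) ^ (-a) :=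
                mul_le_mul (mul_le_mul h1 habs (abs_nonneg _) hT₁2β) le_rfl h3 (by positivity)
            _ = (M₁ * (T₁/2) ^ β) * (t - s) ^ (-a) := by ring
      _ = (M₁ * (T₁/2) ^ β) * (((t - T₁/2) ^ β - (t - T₁) ^ β) / β) := by
          rw [intervalIntegral.integral_const_mul, hIB]
      _ ≤ (M₁ * (T₁/2) ^ β) * (((t - T₁) ^ β + t ^ β + 1) / (H - 1 / 2)) :=
          mul_le_mul_of_nonneg_left hval (by positivity)
      _ ≤ ((M₁ + M₂) * (T₁/2) ^ β) * (((t - T₁) ^ β + t ^ β + 1) / (H - 1 / 2)) := by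
          apply mul_le_mul_of_nonneg_right
            (mul_le_mul_of_nonneg_right (by linarith) hT₁2β) (by positivity)
      _ = (T₁/2) ^ β / (H - 1 / 2) * ((M₁ + M₂) * ((t - T₁) ^ β + t ^ β + 1)) := by ring
  -- Part A final
  have hAfin : M₁ * KA ≤ KA * ((M₁ + M₂) * ((t - T₁) ^ β + t ^ β + 1)) := by
    have h1 : M₁ ≤ (M₁ + M₂) * ((t - T₁) ^ β + t ^ β + 1) := by
      nlinarith [mul_nonneg (add_nonneg hM₁ hM₂) (add_nonneg hx hy)]
    calc M₁ * KA = KA * M₁ := by ring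
      _ ≤ KA * ((M₁ + M₂) * ((t - T₁) ^ β + t ^ β + 1)) :=
          mul_le_mul_of_nonneg_left h1 hKA0
  -- assemble
  have hkey : |∫ s in (0:ℝ)..T₁, (t ^ β * ψ t - s ^ β * ψ s) * (t - s) ^ (-a)|
      ≤ ((T₁ ^ β + (T₁ / 2) ^ β) / (H - 1 / 2) + (KA + 1)) * (M₁ + M₂)
          * ((t - T₁) ^ β + t ^ β + 1) := by
    rw [hsplit, hI₁, hsum]
    have h1 := abs_sub (t ^ β * ψ t * ((t ^ β - (t - T₁) ^ β) / β))
      ((∫ s in (0:ℝ)..T₁/2, s ^ β * ψ s * (t - s) ^ (-a))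
        + ∫ s in (T₁/2)..T₁, s ^ β * ψ s * (t - s) ^ (-a))
    have h2 := abs_add_le (∫ s in (0:ℝ)..T₁/2, s ^ β * ψ s * (t - s) ^ (-a))
      (∫ s in (T₁/2)..T₁, s ^ β * ψ s * (t - s) ^ (-a))
    have hexp : ((T₁ ^ β + (T₁ / 2) ^ β) / (H - 1 / 2) + (KA + 1)) * (M₁ + M₂)
          * ((t - T₁) ^ β + t ^ β + 1)
        = T₁ ^ β / (H - 1 / 2) * ((M₁ + M₂) * ((t - T₁) ^ β + t ^ β + 1))
          + (T₁/2) ^ β / (H - 1 / 2) * ((M₁ + M₂) * ((t - T₁) ^ β + t ^ β + 1))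
          + KA * ((M₁ + M₂) * ((t - T₁) ^ β + t ^ β + 1))
          + (M₁ + M₂) * ((t - T₁) ^ β + t ^ β + 1) := by ring
    have hAB := hABound.trans hAfin
    linarith [hterm1, hBBound]
  calc t ^ (H - 1 / 2) * |∫ s in (0:ℝ)..T₁, (t ^ β * ψ t - s ^ β * ψ s) * (t - s) ^ (-a)|
      ≤ t ^ (H - 1 / 2) * (((T₁ ^ β + (T₁ / 2) ^ β) / (H - 1 / 2) + (KA + 1)) * (M₁ + M₂)
          * ((t - T₁) ^ β + t ^ β + 1)) :=
        mul_le_mul_of_nonneg_left hkey (Real.rpow_nonneg ht0.le _)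
    _ = ((T₁ ^ β + (T₁ / 2) ^ β) / (H - 1 / 2) + (KA + 1)) * t ^ (H - 1 / 2) * (M₁ + M₂)
          * ((t - T₁) ^ β + t ^ β + 1) := by ring
end

section
/- Let H ∈ (1/2, 1), T₁ > 0, and let h : [0, T₁] → ℝ be twice continuously differentiable. Then the function t ↦ t^{H−1/2} ∫_0^t (t^{1/2−H} h'(t) − s^{1/2−H} h'(s)) (t − s)^{−(H+1/2)} ds belongs to L²([0, T₁]), and its L²([0, T₁])-norm is bounded by a constant depending only on H, T₁ and C²(h), where C²(h) = sup_{[0,T₁]} |h| + sup_{[0,T₁]} |h'| + sup_{[0,T₁]} |h''|. -/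
open MeasureTheory intervalIntegral Set

/-!
Write `a = 1/2 - H ∈ (-1/2, 0)` and `f = h'`, and split
`t^a f(t) - s^a f(s) = (t^a - s^a) f(t) + s^a (f(t) - f(s))`.
The second term is at most `M s^a (t - s)` because `f` is `M`-Lipschitz. For the first,
`s^a - t^a = s^a (1 - (s/t)^{-a}) ≤ s^a (1 - s/t)^{1/2} ≤ s^{a-1/2} (t - s)^{1/2}`.
Against the kernel `(t - s)^{a-1}` both terms become Beta-type integrands `s^p (t - s)^q` with
`-1 < p, q ≤ 0`, whose integrals over `[0, t]` are `O(t^{p+q+1})` (bound `s^p` or `(t - s)^q`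
by its value at `t/2` on the half of `[0, t]` where it is smaller). So the inner integral is
`O(t^{2a})`, the function is `O(t^a)`, and its square is integrable on `[0, T₁]` as `2a > -1`.
-/

lemma one_sub_rpow_le_rpow_one_sub {x b : ℝ} (hx0 : 0 ≤ x) (hx1 : x ≤ 1) (hb0 : 0 ≤ b)
    (hb1 : b ≤ 1) : 1 - x ^ b ≤ (1 - x) ^ (1 / 2 : ℝ) := by
  have hxb : x ≤ x ^ b := by simpa using Real.rpow_le_rpow_of_exponent_ge' hx0 hx1 hb0 hb1
  have hy : 1 - x ≤ (1 - x) ^ (1 / 2 : ℝ) := by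
    simpa using Real.rpow_le_rpow_of_exponent_ge' (x := 1 - x) (by linarith) (by linarith)
      (by norm_num : (0 : ℝ) ≤ 1 / 2) (by norm_num : (1 / 2 : ℝ) ≤ 1)
  linarith

lemma rpow_sub_rpow_le {a s t : ℝ} (ha : -1 ≤ a) (ha0 : a ≤ 0) (hs : 0 < s) (hst : s ≤ t) :
    s ^ a - t ^ a ≤ s ^ (a - 1 / 2) * (t - s) ^ (1 / 2 : ℝ) := by
  have ht : 0 < t := hs.trans_le hst
  have hta : t ^ a = s ^ a * (s / t) ^ (-a) := by
    rw [Real.div_rpow hs.le ht.le, Real.rpow_neg hs.le, Real.rpow_neg ht.le]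
    field_simp
  have hratio : 1 - s / t ≤ (t - s) / s := by
    rw [one_sub_div ht.ne']
    exact div_le_div_of_nonneg_left (by linarith) hs hst
  calc s ^ a - t ^ a = s ^ a * (1 - (s / t) ^ (-a)) := by rw [hta]; ring
    _ ≤ s ^ a * (1 - s / t) ^ (1 / 2 : ℝ) := by
      gcongr
      exact one_sub_rpow_le_rpow_one_sub (by positivity) ((div_le_one ht).2 hst)
        (by linarith) (by linarith)
    _ ≤ s ^ a * ((t - s) / s) ^ (1 / 2 : ℝ) := by
      gcongr
      rw [one_sub_div ht.ne']
      positivity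
    _ = s ^ (a - 1 / 2) * (t - s) ^ (1 / 2 : ℝ) := by
      rw [Real.div_rpow (by linarith) hs.le, Real.rpow_sub hs]
      ring

lemma abs_rpow_mul_sub_rpow_mul_le {a s t u v M : ℝ} (ha : -1 ≤ a) (ha0 : a ≤ 0) (hs : 0 < s)
    (hst : s ≤ t) (hv : |v| ≤ M) (huv : |v - u| ≤ M * (t - s)) :
    |t ^ a * v - s ^ a * u| ≤ M * (s ^ (a - 1 / 2) * (t - s) ^ (1 / 2 : ℝ) + s ^ a * (t - s)) := by
  have hsa : 0 ≤ s ^ a := Real.rpow_nonneg hs.le a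
  have hdecr : 0 ≤ s ^ a - t ^ a := sub_nonneg.2 (Real.rpow_le_rpow_of_nonpos hs hst ha0)
  calc |t ^ a * v - s ^ a * u| = |-(s ^ a - t ^ a) * v + s ^ a * (v - u)| := by ring_nf
    _ ≤ (s ^ a - t ^ a) * |v| + s ^ a * |v - u| := by
      refine (abs_add_le _ _).trans_eq ?_
      rw [abs_mul, abs_mul, abs_neg, abs_of_nonneg hdecr, abs_of_nonneg hsa]
    _ ≤ (s ^ (a - 1 / 2) * (t - s) ^ (1 / 2 : ℝ)) * M + s ^ a * (M * (t - s)) := by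
      gcongr
      exact rpow_sub_rpow_le ha ha0 hs hst
    _ = _ := by ring

lemma intervalIntegrable_sub_rpow {q : ℝ} (hq : -1 < q) (t : ℝ) :
    IntervalIntegrable (fun s : ℝ => (t - s) ^ q) volume 0 t := by
  simpa using ((intervalIntegrable_rpow' hq (a := 0) (b := t)).comp_sub_left t).symm

lemma integral_sub_rpow {q : ℝ} (hq : -1 < q) (t : ℝ) :
    ∫ s in (0 : ℝ)..t, (t - s) ^ q = t ^ (q + 1) / (q + 1) := by
  rw [intervalIntegral.integral_comp_sub_left (fun x : ℝ => x ^ q), sub_self, sub_zero,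
    integral_rpow (Or.inl hq), Real.zero_rpow (by linarith), sub_zero]

lemma rpow_mul_sub_rpow_le {p q s t : ℝ} (hp0 : p ≤ 0) (hq0 : q ≤ 0) (ht : 0 < t)
    (hs : s ∈ Icc 0 t) :
    s ^ p * (t - s) ^ q ≤ (t / 2) ^ q * s ^ p + (t / 2) ^ p * (t - s) ^ q := by
  have hsp : 0 ≤ s ^ p := Real.rpow_nonneg hs.1 p
  have hsq : 0 ≤ (t - s) ^ q := Real.rpow_nonneg (sub_nonneg.2 hs.2) q
  rcases le_total s (t / 2) with hst | hst
  · have : (t - s) ^ q ≤ (t / 2) ^ q := Real.rpow_le_rpow_of_nonpos (by positivity) (by linarith) hq0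
    nlinarith [mul_nonneg (Real.rpow_nonneg (half_pos ht).le p) hsq]
  · have : s ^ p ≤ (t / 2) ^ p := Real.rpow_le_rpow_of_nonpos (by positivity) hst hp0
    nlinarith [mul_nonneg (Real.rpow_nonneg (half_pos ht).le q) hsp]

lemma half_rpow_mul_rpow_le {q r t : ℝ} (hq : -1 ≤ q) (ht : 0 < t) :
    (t / 2) ^ q * t ^ r ≤ 2 * t ^ (q + r) := by
  have h2 : 1 ≤ (2 : ℝ) ^ (q + 1) := Real.one_le_rpow (by norm_num) (by linarith)
  rw [Real.div_rpow ht.le (by norm_num), Real.rpow_add ht, Real.rpow_add_one (by norm_num)] at *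
  rw [div_mul_eq_mul_div, div_le_iff₀ (by positivity)]
  nlinarith [mul_pos (Real.rpow_pos_of_pos ht q) (Real.rpow_pos_of_pos ht r)]

section Beta

variable {p q t : ℝ}

lemma intervalIntegrable_beta_majorant (hp : -1 < p) (hq : -1 < q) (t : ℝ) :
    IntervalIntegrable (fun s : ℝ => (t / 2) ^ q * s ^ p + (t / 2) ^ p * (t - s) ^ q) volume 0 t :=
  ((intervalIntegrable_rpow' hp).const_mul _).add ((intervalIntegrable_sub_rpow hq t).const_mul _)

lemma intervalIntegrable_rpow_mul_sub_rpow (hp : -1 < p) (hp0 : p ≤ 0) (hq : -1 < q)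
    (hq0 : q ≤ 0) (ht : 0 < t) :
    IntervalIntegrable (fun s : ℝ => s ^ p * (t - s) ^ q) volume 0 t := by
  refine (intervalIntegrable_beta_majorant hp hq t).mono_fun'
    (by fun_prop : Measurable fun s : ℝ => s ^ p * (t - s) ^ q).aestronglyMeasurable ?_
  rw [uIoc_of_le ht.le, Filter.EventuallyLE, ae_restrict_iff' measurableSet_Ioc]
  refine Filter.Eventually.of_forall fun s hs => ?_
  have hs' : s ∈ Icc 0 t := Ioc_subset_Icc_self hs
  rw [Real.norm_of_nonneg (mul_nonneg (Real.rpow_nonneg hs'.1 p)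
    (Real.rpow_nonneg (sub_nonneg.2 hs'.2) q))]
  exact rpow_mul_sub_rpow_le hp0 hq0 ht hs'

lemma integral_rpow_mul_sub_rpow_le (hp : -1 < p) (hp0 : p ≤ 0) (hq : -1 < q) (hq0 : q ≤ 0)
    (ht : 0 < t) :
    ∫ s in (0 : ℝ)..t, s ^ p * (t - s) ^ q ≤ 2 * (1 / (p + 1) + 1 / (q + 1)) * t ^ (p + q + 1) := by
  have hp1 : 0 < p + 1 := by linarith
  have hq1 : 0 < q + 1 := by linarith
  calc ∫ s in (0 : ℝ)..t, s ^ p * (t - s) ^ q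
      ≤ ∫ s in (0 : ℝ)..t, ((t / 2) ^ q * s ^ p + (t / 2) ^ p * (t - s) ^ q) :=
        integral_mono_on ht.le (intervalIntegrable_rpow_mul_sub_rpow hp hp0 hq hq0 ht)
          (intervalIntegrable_beta_majorant hp hq t) fun s hs => rpow_mul_sub_rpow_le hp0 hq0 ht hs
    _ = (t / 2) ^ q * t ^ (p + 1) / (p + 1) + (t / 2) ^ p * t ^ (q + 1) / (q + 1) := by
        rw [integral_add ((intervalIntegrable_rpow' hp).const_mul _)
          ((intervalIntegrable_sub_rpow hq t).const_mul _), intervalIntegral.integral_const_mul,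
          intervalIntegral.integral_const_mul,
          integral_sub_rpow hq t, integral_rpow (Or.inl hp), Real.zero_rpow hp1.ne']
        ring
    _ ≤ 2 * t ^ (q + (p + 1)) / (p + 1) + 2 * t ^ (p + (q + 1)) / (q + 1) := by
        gcongr ?_ / _ + ?_ / _
        · exact half_rpow_mul_rpow_le hq.le ht
        · exact half_rpow_mul_rpow_le hp.le ht
    _ = 2 * (1 / (p + 1) + 1 / (q + 1)) * t ^ (p + q + 1) := by
        rw [show q + (p + 1) = p + q + 1 by ring, show p + (q + 1) = p + q + 1 by ring]
        ring

end Beta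

section Kernel

variable {a t M : ℝ} {f : ℝ → ℝ}

lemma abs_kernel_le (ha : -1 ≤ a) (ha0 : a ≤ 0) {s : ℝ} (hs : 0 < s) (hst : s < t)
    (hf : |f t| ≤ M) (hlip : |f t - f s| ≤ M * (t - s)) :
    |(t ^ a * f t - s ^ a * f s) * (t - s) ^ (a - 1)|
      ≤ M * (s ^ (a - 1 / 2) * (t - s) ^ (a - 1 / 2) + s ^ a * (t - s) ^ a) := by
  have hts : 0 < t - s := sub_pos.2 hst
  have hk : 0 ≤ (t - s) ^ (a - 1) := Real.rpow_nonneg hts.le _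
  rw [abs_mul, abs_of_nonneg hk]
  calc _ ≤ M * (s ^ (a - 1 / 2) * (t - s) ^ (1 / 2 : ℝ) + s ^ a * (t - s) ^ (1 : ℝ))
        * (t - s) ^ (a - 1) := by
        rw [Real.rpow_one]
        exact mul_le_mul_of_nonneg_right
          (abs_rpow_mul_sub_rpow_mul_le ha ha0 hs hst.le hf hlip) hk
    _ = _ := by
        rw [show a - 1 / 2 = 1 / 2 + (a - 1) by ring, show a = 1 + (a - 1) by ring,
          Real.rpow_add hts, Real.rpow_add hts]
        ring_nf

lemma abs_integral_kernel_le (ha : -1 / 2 < a) (ha0 : a ≤ 0) (ht : 0 < t) (hf : |f t| ≤ M)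
    (hlip : ∀ s ∈ Ioo 0 t, |f t - f s| ≤ M * (t - s)) :
    |∫ s in (0 : ℝ)..t, (t ^ a * f t - s ^ a * f s) * (t - s) ^ (a - 1)|
      ≤ M * (4 / (a + 1 / 2) * t ^ (2 * a) + 4 / (a + 1) * t ^ (2 * a + 1)) := by
  have hM : 0 ≤ M := (abs_nonneg _).trans hf
  have hp : -1 < a - 1 / 2 := by linarith
  have hp0 : a - 1 / 2 ≤ 0 := by linarith
  have hq : -1 < a := by linarith
  have hbeta₁ := integral_rpow_mul_sub_rpow_le hp hp0 hp hp0 ht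
  have hbeta₂ := integral_rpow_mul_sub_rpow_le hq ha0 hq ha0 ht
  calc _ ≤ ∫ s in (0 : ℝ)..t,
          M * (s ^ (a - 1 / 2) * (t - s) ^ (a - 1 / 2) + s ^ a * (t - s) ^ a) := by
        rw [← Real.norm_eq_abs]
        refine norm_integral_le_of_norm_le ht.le ?_ ?_
        · filter_upwards [volume.ae_ne t] with s hne hs
          exact abs_kernel_le (by linarith) ha0 hs.1 (lt_of_le_of_ne hs.2 hne) hf
            (hlip s ⟨hs.1, lt_of_le_of_ne hs.2 hne⟩)
        · exact ((intervalIntegrable_rpow_mul_sub_rpow hp hp0 hp hp0 ht).add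
            (intervalIntegrable_rpow_mul_sub_rpow hq ha0 hq ha0 ht)).const_mul M
    _ = M * ((∫ s in (0 : ℝ)..t, s ^ (a - 1 / 2) * (t - s) ^ (a - 1 / 2))
          + ∫ s in (0 : ℝ)..t, s ^ a * (t - s) ^ a) := by
        rw [intervalIntegral.integral_const_mul, integral_add
          (intervalIntegrable_rpow_mul_sub_rpow hp hp0 hp hp0 ht)
          (intervalIntegrable_rpow_mul_sub_rpow hq ha0 hq ha0 ht)]
    _ ≤ M * (4 / (a + 1 / 2) * t ^ (2 * a) + 4 / (a + 1) * t ^ (2 * a + 1)) := by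
        rw [show a - 1 / 2 + (a - 1 / 2) + 1 = 2 * a by ring,
          show a - 1 / 2 + 1 = a + 1 / 2 by ring] at hbeta₁
        rw [show a + a + 1 = 2 * a + 1 by ring] at hbeta₂
        gcongr
        · exact hbeta₁.trans_eq (by ring)
        · exact hbeta₂.trans_eq (by ring)

lemma abs_rpow_neg_mul_integral_kernel_le {T : ℝ} (ha : -1 / 2 < a) (ha0 : a ≤ 0) (ht : 0 < t)
    (htT : t ≤ T) (hf : |f t| ≤ M)
    (hlip : ∀ s ∈ Ioo 0 t, |f t - f s| ≤ M * (t - s)) :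
    |t ^ (-a) * ∫ s in (0 : ℝ)..t, (t ^ a * f t - s ^ a * f s) * (t - s) ^ (a - 1)|
      ≤ M * (4 / (a + 1 / 2) + 4 / (a + 1) * T) * t ^ a := by
  have hM : 0 ≤ M := (abs_nonneg _).trans hf
  have hw : 0 ≤ t ^ (-a) := Real.rpow_nonneg ht.le _
  rw [abs_mul, abs_of_nonneg hw]
  calc _ ≤ t ^ (-a) * (M * (4 / (a + 1 / 2) * t ^ (2 * a) + 4 / (a + 1) * t ^ (2 * a + 1))) :=
        mul_le_mul_of_nonneg_left (abs_integral_kernel_le ha ha0 ht hf hlip) hw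
    _ = t ^ (-a) * (M * (4 / (a + 1 / 2) + 4 / (a + 1) * t) * t ^ (2 * a)) := by
        rw [Real.rpow_add_one ht.ne']
        ring
    _ ≤ t ^ (-a) * (M * (4 / (a + 1 / 2) + 4 / (a + 1) * T) * t ^ (2 * a)) := by
        have : 0 ≤ 4 / (a + 1) := div_nonneg (by norm_num) (by linarith)
        gcongr
    _ = M * (4 / (a + 1 / 2) + 4 / (a + 1) * T) * t ^ a := by
        rw [mul_left_comm, ← Real.rpow_add ht, show -a + 2 * a = a by ring]

end Kernel

lemma stronglyMeasurable_intervalIntegral_of_measurable_uncurry {F : ℝ → ℝ → ℝ}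
    (hF : Measurable (Function.uncurry F)) (a : ℝ) :
    StronglyMeasurable fun t => ∫ s in a..t, F t s := by
  have hpiece : ∀ S : Set (ℝ × ℝ), MeasurableSet S →
      StronglyMeasurable fun t => ∫ s, S.indicator (Function.uncurry F) (t, s) :=
    fun S hS => ((hF.indicator hS).stronglyMeasurable).integral_prod_right'
  have hS₁ : MeasurableSet {p : ℝ × ℝ | p.2 ∈ Ioc a p.1} :=
    (measurableSet_lt measurable_const measurable_snd).inter
      (measurableSet_le measurable_snd measurable_fst)
  have hS₂ : MeasurableSet {p : ℝ × ℝ | p.2 ∈ Ioc p.1 a} :=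
    (measurableSet_lt measurable_fst measurable_snd).inter
      (measurableSet_le measurable_snd measurable_const)
  convert (hpiece _ hS₁).sub (hpiece _ hS₂) using 1
  ext t
  rw [intervalIntegral, ← MeasureTheory.integral_indicator measurableSet_Ioc,
    ← MeasureTheory.integral_indicator measurableSet_Ioc]
  rfl

lemma integrableOn_sq_and_setIntegral_sq_le {g : ℝ → ℝ} {a K T : ℝ} (ha : -1 / 2 < a)
    (hT : 0 ≤ T) (hg : AEStronglyMeasurable g (volume.restrict (Icc 0 T)))
    (hbound : ∀ t ∈ Ioc 0 T, |g t| ≤ K * t ^ a) :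
    IntegrableOn (fun t => g t ^ 2) (Icc 0 T)
      ∧ ∫ t in Icc 0 T, g t ^ 2 ≤ K ^ 2 * (T ^ (2 * a + 1) / (2 * a + 1)) := by
  have hsq : ∀ t ∈ Ioc 0 T, g t ^ 2 ≤ K ^ 2 * t ^ (2 * a) := by
    intro t ht
    calc g t ^ 2 = |g t| ^ 2 := (sq_abs _).symm
      _ ≤ (K * t ^ a) ^ 2 := pow_le_pow_left₀ (abs_nonneg _) (hbound t ht) 2
      _ = K ^ 2 * t ^ (2 * a) := by
        rw [mul_pow, ← Real.rpow_mul_natCast ht.1.le]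
        ring_nf
  have hmajor : IntegrableOn (fun t => K ^ 2 * t ^ (2 * a)) (Ioc 0 T) :=
    ((intervalIntegrable_rpow' (by linarith)).1).const_mul _
  have hint : IntegrableOn (fun t => g t ^ 2) (Ioc 0 T) := by
    refine hmajor.mono' ((hg.mono_set Ioc_subset_Icc_self).pow 2) ?_
    rw [ae_restrict_iff' measurableSet_Ioc]
    exact Filter.Eventually.of_forall fun t ht => by
      rw [Real.norm_of_nonneg (sq_nonneg _)]; exact hsq t ht
  refine ⟨(integrableOn_Icc_iff_integrableOn_Ioc).2 hint, ?_⟩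
  calc ∫ t in Icc 0 T, g t ^ 2 = ∫ t in Ioc 0 T, g t ^ 2 := integral_Icc_eq_integral_Ioc
    _ ≤ ∫ t in Ioc 0 T, K ^ 2 * t ^ (2 * a) := setIntegral_mono_on hint hmajor measurableSet_Ioc hsq
    _ = K ^ 2 * (T ^ (2 * a + 1) / (2 * a + 1)) := by
      rw [← intervalIntegral.integral_of_le hT, intervalIntegral.integral_const_mul,
        integral_rpow (Or.inl (by linarith)), Real.zero_rpow (by linarith), sub_zero]

/-- For `H ∈ (1/2, 1)`, `T₁ > 0` and a bound `M` on the `C²`-norm, there is a constant `C`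
(depending only on `H`, `T₁` and `M`) such that for every twice continuously differentiable
`h` with `|h| + |h'| + |h''| ≤ M` on `[0, T₁]`, the function
`t ↦ t^{H−1/2} ∫_0^t (t^{1/2−H} h'(t) − s^{1/2−H} h'(s)) (t − s)^{−(H+1/2)} ds`
belongs to `L²([0, T₁])` with squared `L²`-norm at most `C`. -/
theorem I2_L2_bound_single_path
    (H : ℝ) (hH₁ : 1 / 2 < H) (hH₂ : H < 1) (T₁ : ℝ) (hT₁ : 0 < T₁) (M : ℝ) :
    ∃ C : ℝ, ∀ h : ℝ → ℝ, ContDiff ℝ 2 h →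
      (∀ s ∈ Icc (0:ℝ) T₁, |h s| + |deriv h s| + |deriv (deriv h) s| ≤ M) →
      IntegrableOn
          (fun t : ℝ => (t ^ (H - 1 / 2) *
            ∫ s in (0:ℝ)..t,
              (t ^ (1 / 2 - H) * deriv h t - s ^ (1 / 2 - H) * deriv h s)
                * (t - s) ^ (-(H + 1 / 2))) ^ 2)
          (Icc 0 T₁)
      ∧ (∫ t in Icc (0:ℝ) T₁, (t ^ (H - 1 / 2) *
            ∫ s in (0:ℝ)..t,
              (t ^ (1 / 2 - H) * deriv h t - s ^ (1 / 2 - H) * deriv h s)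
                * (t - s) ^ (-(H + 1 / 2))) ^ 2) ≤ C := by
  rw [show H - 1 / 2 = -(1 / 2 - H) by ring, show -(H + 1 / 2) = 1 / 2 - H - 1 by ring]
  have ha : -1 / 2 < 1 / 2 - H := by linarith
  have ha0 : 1 / 2 - H ≤ 0 := by linarith
  set a := 1 / 2 - H
  refine ⟨(M * (4 / (a + 1 / 2) + 4 / (a + 1) * T₁)) ^ 2 * (T₁ ^ (2 * a + 1) / (2 * a + 1)),
    fun h hh hb => ?_⟩
  have hh' : ContDiff ℝ 1 (deriv h) := ContDiff.deriv' (n := 1) hh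
  have hbound : ∀ s ∈ Icc 0 T₁, |deriv h s| ≤ M ∧ |deriv (deriv h) s| ≤ M := fun s hs => by
    have := hb s hs
    constructor <;> linarith [abs_nonneg (h s), abs_nonneg (deriv h s),
      abs_nonneg (deriv (deriv h) s)]
  have hlip : ∀ s ∈ Icc 0 T₁, ∀ t ∈ Icc 0 T₁, s ≤ t → |deriv h t - deriv h s| ≤ M * (t - s) := by
    intro s hs t ht hst
    simpa only [Real.norm_eq_abs, abs_of_nonneg (sub_nonneg.2 hst)] using
      (convex_Icc 0 T₁).norm_image_sub_le_of_norm_deriv_le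
        (fun x _ => hh'.differentiable one_ne_zero x) (fun x hx => (hbound x hx).2) hs ht
  have hmeas : Measurable (Function.uncurry fun t s : ℝ =>
      (t ^ a * deriv h t - s ^ a * deriv h s) * (t - s) ^ (a - 1)) := by
    have := hh'.continuous.measurable
    unfold Function.uncurry
    fun_prop
  refine integrableOn_sq_and_setIntegral_sq_le ha hT₁.le
    (((by fun_prop : Measurable fun t : ℝ => t ^ (-a)).stronglyMeasurable.mul
      (stronglyMeasurable_intervalIntegral_of_measurable_uncurry hmeas 0)).aestronglyMeasurable)
    fun t ht => ?_
  have ht' : t ∈ Icc 0 T₁ := Ioc_subset_Icc_self ht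
  exact abs_rpow_neg_mul_integral_kernel_le ha ha0 ht.1 ht.2 (hbound t ht').1
    fun s hs => hlip s ⟨hs.1.le, hs.2.le.trans ht.2⟩ t ht' hs.2.le
end
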